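/- Let q : (0,1) → (0,∞) be a function such that for all R ∈ (0,1) and all r with 0 < r < R/(1+R)^2, one has (1-R)^{2A} q(R) ≤ q(r) ≤ (1+R)^{2A} q(R), where A > 0 is a fixed constant. Then the limit L = lim_{r→0+} q(r) exists, is finite and positive, and moreover L(1+R)^{-2A} ≤ q(R) ≤ L(1-R)^{-2A} for every R ∈ (0,1). -/
import Mathlib


/-- If `q : (0,1) → (0,∞)` satisfies the two-sided comparison
`(1-R)^{2A} q(R) ≤ q(r) ≤ (1+R)^{2A} q(R)` for all `R ∈ (0,1)` and `0 < r < R/(1+R)²`,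
where `A > 0`, then `L = lim_{r→0+} q(r)` exists, is finite and positive, and
`L(1+R)^{-2A} ≤ q(R) ≤ L(1-R)^{-2A}` for every `R ∈ (0,1)`. -/
theorem limit_of_comparison (A : ℝ) (hA : 0 < A) (q : ℝ → ℝ)
    (hq_pos : ∀ r ∈ Set.Ioo (0:ℝ) 1, 0 < q r)
    (hq : ∀ R ∈ Set.Ioo (0:ℝ) 1, ∀ r : ℝ, 0 < r → r < R / (1 + R) ^ 2 →
      (1 - R) ^ (2 * A) * q R ≤ q r ∧ q r ≤ (1 + R) ^ (2 * A) * q R) :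
    ∃ L : ℝ, 0 < L ∧
      Filter.Tendsto q (nhdsWithin 0 (Set.Ioi 0)) (nhds L) ∧
      ∀ R ∈ Set.Ioo (0:ℝ) 1,
        L * (1 + R) ^ (-(2 * A)) ≤ q R ∧ q R ≤ L * (1 - R) ^ (-(2 * A)) := by
  set f : ℝ → ℝ := fun R => (1 + R) ^ (2 * A) * q R with hf
  set g : ℝ → ℝ := fun R => (1 - R) ^ (2 * A) * q R with hg
  -- thresholds are positive
  have hthr : ∀ R ∈ Set.Ioo (0:ℝ) 1, 0 < R / (1 + R) ^ 2 := by
    intro R hR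
    have h1 : (0:ℝ) < (1 + R) ^ 2 := by nlinarith [hR.1]
    exact div_pos hR.1 h1
  have hgpos : ∀ R ∈ Set.Ioo (0:ℝ) 1, 0 < g R := by
    intro R hR
    have h1 : (0:ℝ) < 1 - R := by nlinarith [hR.2]
    have := hq_pos R hR
    simp only [hg]
    positivity
  have hfpos : ∀ R ∈ Set.Ioo (0:ℝ) 1, 0 < f R := by
    intro R hR
    have h1 : (0:ℝ) < 1 + R := by nlinarith [hR.1]
    have := hq_pos R hR
    simp only [hf]
    positivity
  -- g R' ≤ f R for all R, R' in (0,1)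
  have hgf : ∀ R ∈ Set.Ioo (0:ℝ) 1, ∀ R' ∈ Set.Ioo (0:ℝ) 1, g R' ≤ f R := by
    intro R hR R' hR'
    set r := min (R / (1 + R) ^ 2) (R' / (1 + R') ^ 2) / 2 with hr
    have h1 := hthr R hR
    have h2 := hthr R' hR'
    have hrpos : 0 < r := by rw [hr]; positivity
    have hrR : r < R / (1 + R) ^ 2 := by
      have := min_le_left (R / (1 + R) ^ 2) (R' / (1 + R') ^ 2)
      rw [hr]; linarith [lt_min h1 h2]
    have hrR' : r < R' / (1 + R') ^ 2 := by
      rw [hr]; linarith [lt_min h1 h2, min_le_right (R / (1 + R) ^ 2) (R' / (1 + R') ^ 2)]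
    exact le_trans (hq R' hR' r hrpos hrR').1 (hq R hR r hrpos hrR).2
  set S : Set ℝ := f '' Set.Ioo 0 1 with hS
  have hhalf : (1/2 : ℝ) ∈ Set.Ioo (0:ℝ) 1 := by norm_num
  have hSne : S.Nonempty := ⟨f (1/2), ⟨1/2, hhalf, rfl⟩⟩
  have hSbdd : BddBelow S := by
    refine ⟨g (1/2), ?_⟩
    rintro x ⟨R, hR, rfl⟩
    exact hgf R hR (1/2) hhalf
  set L : ℝ := sInf S with hL
  have hLge : ∀ R ∈ Set.Ioo (0:ℝ) 1, g R ≤ L := by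
    intro R hR
    apply le_csInf hSne
    rintro x ⟨R', hR', rfl⟩
    exact hgf R' hR' R hR
  have hLle : ∀ R ∈ Set.Ioo (0:ℝ) 1, L ≤ f R := by
    intro R hR
    exact csInf_le hSbdd ⟨R, hR, rfl⟩
  have hLpos : 0 < L := lt_of_lt_of_le (hgpos _ hhalf) (hLge _ hhalf)
  refine ⟨L, hLpos, ?_, ?_⟩
  · -- tendsto
    rw [tendsto_order]
    constructor
    · -- ∀ a < L, eventually a < q r
      intro a ha
      -- find R ∈ (0,1) with a < g R, using that ((1-R)/(1+R))^(2A) * L → L as R → 0+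
      have hcont : Filter.Tendsto (fun R : ℝ => ((1 - R) / (1 + R)) ^ (2 * A) * L)
          (nhdsWithin 0 (Set.Ioi 0)) (nhds L) := by
        have hb : Filter.Tendsto (fun R : ℝ => (1 - R) / (1 + R)) (nhds 0) (nhds 1) := by
          have : Filter.Tendsto (fun R : ℝ => (1 - R) / (1 + R)) (nhds 0)
              (nhds ((1 - 0) / (1 + 0))) := by
            apply Filter.Tendsto.div
            · exact (continuous_const.sub continuous_id).tendsto 0
            · exact (continuous_const.add continuous_id).tendsto 0
            · norm_num
          simpa using this
        have h1 : Filter.Tendsto (fun R : ℝ => ((1 - R) / (1 + R)) ^ (2 * A)) (nhds 0)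
            (nhds ((1:ℝ) ^ (2 * A))) := hb.rpow_const (Or.inl one_ne_zero)
        rw [Real.one_rpow] at h1
        have h2 := (h1.mul_const L)
        rw [one_mul] at h2
        exact h2.mono_left nhdsWithin_le_nhds
      have hev : ∀ᶠ R in nhdsWithin 0 (Set.Ioi 0),
          a < ((1 - R) / (1 + R)) ^ (2 * A) * L ∧ R ∈ Set.Ioo (0:ℝ) 1 := by
        filter_upwards [hcont.eventually (eventually_gt_nhds ha),
          Ioo_mem_nhdsGT_of_mem (by norm_num : (0:ℝ) ∈ Set.Ico (0:ℝ) 1)] with R h1 h2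
        exact ⟨h1, h2⟩
      obtain ⟨R, haR, hR⟩ := hev.exists
      -- a < ((1-R)/(1+R))^(2A) * L ≤ g R ≤ q r eventually
      have h1R : (0:ℝ) < 1 + R := by nlinarith [hR.1]
      have h1R' : (0:ℝ) < 1 - R := by nlinarith [hR.2]
      have hpf : (0:ℝ) < (1 + R) ^ (2 * A) := Real.rpow_pos_of_pos h1R _
      have hpg : (0:ℝ) < (1 - R) ^ (2 * A) := Real.rpow_pos_of_pos h1R' _
      have hdiv : ((1 - R) / (1 + R)) ^ (2 * A) = (1 - R) ^ (2 * A) / (1 + R) ^ (2 * A) :=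
        Real.div_rpow h1R'.le h1R.le _
      have hLf := hLle R hR
      have hkey : ((1 - R) / (1 + R)) ^ (2 * A) * L ≤ g R := by
        rw [hdiv]
        have : (1 - R) ^ (2 * A) / (1 + R) ^ (2 * A) * L
            ≤ (1 - R) ^ (2 * A) / (1 + R) ^ (2 * A) * ((1 + R) ^ (2 * A) * q R) := by
          apply mul_le_mul_of_nonneg_left hLf (by positivity)
        calc (1 - R) ^ (2 * A) / (1 + R) ^ (2 * A) * L
            ≤ (1 - R) ^ (2 * A) / (1 + R) ^ (2 * A) * ((1 + R) ^ (2 * A) * q R) := this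
          _ = g R := by simp only [hg]; field_simp
      filter_upwards [Ioo_mem_nhdsGT_of_mem
        (Set.left_mem_Ico.2 (hthr R hR))] with r hr
      have := (hq R hR r hr.1 hr.2).1
      calc a < ((1 - R) / (1 + R)) ^ (2 * A) * L := haR
        _ ≤ g R := hkey
        _ ≤ q r := this
    · -- ∀ b > L, eventually q r < b
      intro b hb
      obtain ⟨x, ⟨R, hR, rfl⟩, hxb⟩ := exists_lt_of_csInf_lt hSne hb
      filter_upwards [Ioo_mem_nhdsGT_of_mem
        (Set.left_mem_Ico.2 (hthr R hR))] with r hr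
      exact lt_of_le_of_lt (hq R hR r hr.1 hr.2).2 hxb
  · -- bounds
    intro R hR
    have h1R : (0:ℝ) < 1 + R := by nlinarith [hR.1]
    have h1R' : (0:ℝ) < 1 - R := by nlinarith [hR.2]
    have hpf : (0:ℝ) < (1 + R) ^ (2 * A) := Real.rpow_pos_of_pos h1R _
    have hpg : (0:ℝ) < (1 - R) ^ (2 * A) := Real.rpow_pos_of_pos h1R' _
    have hLf : L ≤ (1 + R) ^ (2 * A) * q R := hLle R hR
    have hgL : (1 - R) ^ (2 * A) * q R ≤ L := hLge R hR
    constructor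
    · rw [Real.rpow_neg h1R.le, ← div_eq_mul_inv, div_le_iff₀ hpf]
      linarith [hLf]
    · rw [Real.rpow_neg h1R'.le, ← div_eq_mul_inv, le_div_iff₀ hpg]
      linarith [hgL]
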